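/- arXiv:2502.20375 — 5 statements merged into one kernel-verified Lean document; each statement's English description precedes it below -/
import Mathlib

section
/- If δ : X → [-1,1] satisfies E[δ(x)·(z - h1(x))] ≥ β ≥ 0, then the updated hypothesis h2(x) = Π_{[0,1]}(h1(x) + β·δ(x)) (projection onto [0,1]) satisfies E[(h1(x) - z)²] - E[(h2(x) - z)²] ≥ β². -/
/-- If E[δ(x)(z - h1(x))] ≥ β ≥ 0, then the updated hypothesis
h2(x) = Π_{[0,1]}(h1(x) + β δ(x)) satisfies
E[(h1 x - z)^2] - E[(h2 x - z)^2] ≥ β². -/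
theorem stmt_1 {Ω X : Type*} [Fintype Ω]
    (μ : Ω → ℝ) (hμ : ∀ ω, 0 ≤ μ ω) (hsum : ∑ ω, μ ω = 1)
    (x : Ω → X) (z : Ω → ℝ) (hz : ∀ ω, z ω ∈ Set.Icc (0:ℝ) 1)
    (h1 : X → ℝ) (hh1 : ∀ a, h1 a ∈ Set.Icc (0:ℝ) 1)
    (δ : X → ℝ) (hδ : ∀ a, δ a ∈ Set.Icc (-1:ℝ) 1)
    (β : ℝ) (hβ : 0 ≤ β)
    (hcorr : β ≤ ∑ ω, μ ω * (δ (x ω) * (z ω - h1 (x ω))))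
    (h2 : X → ℝ) (hh2 : ∀ a, h2 a = min (max (h1 a + β * δ a) 0) 1) :
    β ^ 2 ≤ (∑ ω, μ ω * (h1 (x ω) - z ω) ^ 2) - ∑ ω, μ ω * (h2 (x ω) - z ω) ^ 2 := by
  have hproj : ∀ ω, μ ω * (h2 (x ω) - z ω) ^ 2 ≤
      μ ω * (h1 (x ω) + β * δ (x ω) - z ω) ^ 2 := by
    intro ω
    apply mul_le_mul_of_nonneg_left _ (hμ ω)
    rw [hh2]
    obtain ⟨hz0, hz1⟩ := hz ω
    set a := h1 (x ω) + β * δ (x ω) with ha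
    rcases le_total a 0 with h | h
    · rw [max_eq_right h, min_eq_left (by linarith)]
      nlinarith
    · rw [max_eq_left h]
      rcases le_total a 1 with h' | h'
      · rw [min_eq_left h']
      · rw [min_eq_right h']; nlinarith
  have hsum2 : ∑ ω, μ ω * (h2 (x ω) - z ω) ^ 2 ≤
      ∑ ω, μ ω * (h1 (x ω) + β * δ (x ω) - z ω) ^ 2 :=
    Finset.sum_le_sum fun ω _ => hproj ω
  have hδ2 : ∑ ω, μ ω * (δ (x ω)) ^ 2 ≤ 1 := by
    rw [← hsum]
    apply Finset.sum_le_sum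
    intro ω _
    have h := hδ (x ω)
    have hd : δ (x ω) ^ 2 ≤ 1 := by nlinarith [h.1, h.2]
    calc μ ω * δ (x ω) ^ 2 ≤ μ ω * 1 := mul_le_mul_of_nonneg_left hd (hμ ω)
      _ = μ ω := mul_one _
  have hexp : ∑ ω, μ ω * (h1 (x ω) - z ω) ^ 2 -
      ∑ ω, μ ω * (h1 (x ω) + β * δ (x ω) - z ω) ^ 2 =
      2 * β * (∑ ω, μ ω * (δ (x ω) * (z ω - h1 (x ω)))) -
      β ^ 2 * ∑ ω, μ ω * (δ (x ω)) ^ 2 := by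
    rw [Finset.mul_sum, Finset.mul_sum, ← Finset.sum_sub_distrib, ← Finset.sum_sub_distrib]
    exact Finset.sum_congr rfl fun ω _ => by ring
  have h3 := mul_le_mul_of_nonneg_left hcorr hβ
  have h4 := mul_le_mul_of_nonneg_left hδ2 (sq_nonneg β)
  nlinarith [hsum2, hexp]
end

section
/- If a loss predictor LP achieves advantage α ≥ 0 over the self-entropy predictor SEP (i.e., E[(ℓ(y,p(x)) - SEP(p(x)))²] - E[(ℓ(y,p(x)) - LP(φ(p,x)))²] = α), then the function δ(φ(p,x)) = LP(φ(p,x)) - SEP(p(x)) satisfies E[δ(φ(p,x))·H'(p(x))·(y - p(x))] ≥ α/2; that is, c(φ(p,x)) = δ(φ(p,x))·H'(p(x)) witnesses a multicalibration violation of magnitude α/2. -/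
/-- If a loss predictor LP achieves advantage α ≥ 0 over the
self-entropy predictor SEP = H ∘ p, then
δ(φ(p,x)) = LP(φ(p,x)) - SEP(p(x)) satisfies
E[δ(φ(p,x)) H'(p(x)) (y - p(x))] ≥ α/2. -/
theorem stmt_6 {Ω X Φ : Type*} [Fintype Ω]
    (μ : Ω → ℝ) (hμ : ∀ ω, 0 ≤ μ ω) (hsum : ∑ ω, μ ω = 1)
    (x : Ω → X) (y : Ω → Bool)
    (p : X → ℝ) (hp : ∀ a, p a ∈ Set.Icc (0:ℝ) 1)
    (ℓ : Bool → ℝ → ℝ) (H H' : ℝ → ℝ)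
    (hrep : ∀ (b : Bool) (v : ℝ), v ∈ Set.Icc (0:ℝ) 1 →
      ℓ b v = H v + ((if b then (1:ℝ) else 0) - v) * H' v)
    (φm : X → Φ) (LP : Φ → ℝ) (hLP : ∀ u, LP u ∈ Set.Icc (0:ℝ) 1)
    (α : ℝ) (hα : 0 ≤ α)
    (hadv : (∑ ω, μ ω * (ℓ (y ω) (p (x ω)) - H (p (x ω))) ^ 2)
        - (∑ ω, μ ω * (ℓ (y ω) (p (x ω)) - LP (φm (x ω))) ^ 2) = α) :
    α / 2 ≤ ∑ ω, μ ω * ((LP (φm (x ω)) - H (p (x ω))) * H' (p (x ω))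
        * ((if y ω then (1:ℝ) else 0) - p (x ω))) := by
  have key : ∀ ω, μ ω * (ℓ (y ω) (p (x ω)) - H (p (x ω))) ^ 2
      - μ ω * (ℓ (y ω) (p (x ω)) - LP (φm (x ω))) ^ 2
      = 2 * (μ ω * ((LP (φm (x ω)) - H (p (x ω))) * H' (p (x ω))
          * ((if y ω then (1:ℝ) else 0) - p (x ω))))
        - μ ω * (LP (φm (x ω)) - H (p (x ω))) ^ 2 := by
    intro ω
    rw [hrep (y ω) (p (x ω)) (hp (x ω))]
    ring
  have hsum2 : α = 2 * (∑ ω, μ ω * ((LP (φm (x ω)) - H (p (x ω))) * H' (p (x ω))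
      * ((if y ω then (1:ℝ) else 0) - p (x ω))))
      - ∑ ω, μ ω * (LP (φm (x ω)) - H (p (x ω))) ^ 2 := by
    rw [← hadv, ← Finset.sum_sub_distrib]
    rw [Finset.sum_congr rfl (fun ω _ => key ω)]
    rw [Finset.sum_sub_distrib, Finset.mul_sum]
  have hnn : 0 ≤ ∑ ω, μ ω * (LP (φm (x ω)) - H (p (x ω))) ^ 2 :=
    Finset.sum_nonneg fun ω _ => mul_nonneg (hμ ω) (sq_nonneg _)
  linarith
end

section
/- If there exists δ : Φ → [-1,1] with E[δ(φ(p,x))·H'(p(x))·(y - p(x))] ≥ β ≥ 0, then the loss predictor LP(φ(p,x)) = Π_{[0,1]}(H(p(x)) + β·δ(φ(p,x))) achieves advantage at least β² over the self-entropy predictor: E[(ℓ(y,p(x)) - H(p(x)))²] - E[(ℓ(y,p(x)) - LP(φ(p,x)))²] ≥ β². -/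
/-- If δ : Φ → [-1,1] satisfies
E[δ(φ(p,x)) H'(p(x)) (y - p(x))] ≥ β ≥ 0, then
LP(φ(p,x)) = Π_{[0,1]}(H(p(x)) + β δ(φ(p,x))) achieves advantage ≥ β². -/
theorem stmt_7 {Ω X Φ : Type*} [Fintype Ω]
    (μ : Ω → ℝ) (hμ : ∀ ω, 0 ≤ μ ω) (hsum : ∑ ω, μ ω = 1)
    (x : Ω → X) (y : Ω → Bool)
    (p : X → ℝ) (hp : ∀ a, p a ∈ Set.Icc (0:ℝ) 1)
    (ℓ : Bool → ℝ → ℝ) (hℓ : ∀ b v, v ∈ Set.Icc (0:ℝ) 1 → ℓ b v ∈ Set.Icc (0:ℝ) 1)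
    (H H' : ℝ → ℝ)
    (hrep : ∀ (b : Bool) (v : ℝ), v ∈ Set.Icc (0:ℝ) 1 →
      ℓ b v = H v + ((if b then (1:ℝ) else 0) - v) * H' v)
    (φm : X → Φ)
    (δ : Φ → ℝ) (hδ : ∀ u, δ u ∈ Set.Icc (-1:ℝ) 1)
    (β : ℝ) (hβ : 0 ≤ β)
    (hcorr : β ≤ ∑ ω, μ ω * (δ (φm (x ω)) * H' (p (x ω))
        * ((if y ω then (1:ℝ) else 0) - p (x ω))))
    (LP : Φ → ℝ) (hLPdef : ∀ a : X, LP (φm a) = min (max (H (p a) + β * δ (φm a)) 0) 1) :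
    β ^ 2 ≤ (∑ ω, μ ω * (ℓ (y ω) (p (x ω)) - H (p (x ω))) ^ 2)
        - ∑ ω, μ ω * (ℓ (y ω) (p (x ω)) - LP (φm (x ω))) ^ 2 := by
  -- Step 1: clipping only helps
  have key : ∀ ω, μ ω * (ℓ (y ω) (p (x ω)) - LP (φm (x ω))) ^ 2
      ≤ μ ω * (ℓ (y ω) (p (x ω)) - (H (p (x ω)) + β * δ (φm (x ω)))) ^ 2 := by
    intro ω
    apply mul_le_mul_of_nonneg_left _ (hμ ω)
    rw [hLPdef]
    have hL := hℓ (y ω) (p (x ω)) (hp (x ω))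
    set L := ℓ (y ω) (p (x ω)) with hLdef
    set t := H (p (x ω)) + β * δ (φm (x ω)) with htdef
    rcases le_or_gt t 0 with h | h
    · have hmm : min (max t 0) 1 = 0 := by
        rw [max_eq_right h]; simp
      rw [hmm]; nlinarith [hL.1, hL.2]
    rcases le_or_gt 1 t with h1 | h1
    · have hmm : min (max t 0) 1 = 1 := by
        rw [max_eq_left (by linarith), min_eq_right h1]
      rw [hmm]; nlinarith [hL.1, hL.2]
    · have hmm : min (max t 0) 1 = t := by
        rw [max_eq_left h.le, min_eq_left h1.le]
      rw [hmm]
  have hsum1 : ∑ ω, μ ω * (ℓ (y ω) (p (x ω)) - LP (φm (x ω))) ^ 2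
      ≤ ∑ ω, μ ω * (ℓ (y ω) (p (x ω)) - (H (p (x ω)) + β * δ (φm (x ω)))) ^ 2 :=
    Finset.sum_le_sum fun ω _ => key ω
  -- rewrite ℓ
  have hrw : ∀ ω, ℓ (y ω) (p (x ω))
      = H (p (x ω)) + ((if y ω then (1:ℝ) else 0) - p (x ω)) * H' (p (x ω)) :=
    fun ω => hrep _ _ (hp _)
  set S := ∑ ω, μ ω * (δ (φm (x ω)) * H' (p (x ω))
      * ((if y ω then (1:ℝ) else 0) - p (x ω))) with hS
  set T := ∑ ω, μ ω * (δ (φm (x ω))) ^ 2 with hT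
  have hTle : T ≤ 1 := by
    rw [hT, ← hsum]
    apply Finset.sum_le_sum
    intro ω _
    have h := hδ (φm (x ω))
    have h1 : δ (φm (x ω)) ^ 2 ≤ 1 := by nlinarith [h.1, h.2]
    calc μ ω * δ (φm (x ω)) ^ 2 ≤ μ ω * 1 := by
          exact mul_le_mul_of_nonneg_left h1 (hμ ω)
      _ = μ ω := mul_one _
  have expand : (∑ ω, μ ω * (ℓ (y ω) (p (x ω)) - H (p (x ω))) ^ 2)
      - (∑ ω, μ ω * (ℓ (y ω) (p (x ω)) - (H (p (x ω)) + β * δ (φm (x ω)))) ^ 2)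
      = 2 * β * S - β ^ 2 * T := by
    rw [hS, hT, Finset.mul_sum, Finset.mul_sum, ← Finset.sum_sub_distrib,
      ← Finset.sum_sub_distrib]
    apply Finset.sum_congr rfl
    intro ω _
    rw [hrw ω]
    ring
  nlinarith [hsum1, expand, mul_le_mul_of_nonneg_left hcorr hβ,
    mul_le_mul_of_nonneg_left hTle (sq_nonneg β)]
end

section
/- Let F be a class of loss predictors f : Φ → [0,1], let F' = {Π_{[0,1]}((1-β)H(p(x)) + β·f(φ(p,x))) : β ∈ [-1,1], f ∈ F}, and let C = {(f(φ(p,x)) - H(p(x)))·H'(p(x)) : f ∈ F}. Then (1/2)·max_{LP ∈ F} adv(LP) ≤ MCE(C, p) ≤ sqrt(max_{LP ∈ F'} adv(LP)), where adv(LP) = E[(ℓ(y,p(x)) - H(p(x)))²] - E[(ℓ(y,p(x)) - LP(φ(p,x)))²] and MCE(C,p) = max_{c ∈ C} |E[(y - p(x))·c(φ(p,x))]|. -/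
/-- Theorem 4.1: Let F be a class of loss predictors f : Φ → [0,1],
F' the augmented class {Π_{[0,1]}((1-β)H(p(x)) + β f(φ(p,x))) : β ∈ [-1,1], f ∈ F},
and C = {(f(φ(p,x)) - H(p(x))) H'(p(x)) : f ∈ F}. Then
(1/2) max_{LP ∈ F} adv(LP) ≤ MCE(C, p) ≤ sqrt(max_{LP ∈ F'} adv(LP)).
The feature map φ is assumed to contain the prediction p(x), via the
extraction map q with q (φ p x) = p x. -/
theorem stmt_8 {Ω X Φ : Type*} [Fintype Ω]
    (μ : Ω → ℝ) (hμ : ∀ ω, 0 ≤ μ ω) (hsum : ∑ ω, μ ω = 1)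
    (x : Ω → X) (y : Ω → Bool)
    (p : X → ℝ) (hp : ∀ a, p a ∈ Set.Icc (0:ℝ) 1)
    (ℓ : Bool → ℝ → ℝ) (hℓ : ∀ b v, v ∈ Set.Icc (0:ℝ) 1 → ℓ b v ∈ Set.Icc (0:ℝ) 1)
    (H H' : ℝ → ℝ)
    (hrep : ∀ (b : Bool) (v : ℝ), v ∈ Set.Icc (0:ℝ) 1 →
      ℓ b v = H v + ((if b then (1:ℝ) else 0) - v) * H' v)
    (hH' : ∀ v ∈ Set.Icc (0:ℝ) 1, H' v ∈ Set.Icc (-1:ℝ) 1)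
    (φm : X → Φ) (q : Φ → ℝ) (hq : ∀ a : X, q (φm a) = p a)
    (F : Set (Φ → ℝ)) (hFne : F.Nonempty)
    (hF : ∀ f ∈ F, ∀ u, f u ∈ Set.Icc (0:ℝ) 1)
    -- the advantage of a loss predictor over the self-entropy predictor
    (adv : (Φ → ℝ) → ℝ)
    (hadv : ∀ LP : Φ → ℝ, adv LP =
      (∑ ω, μ ω * (ℓ (y ω) (p (x ω)) - H (p (x ω))) ^ 2)
        - ∑ ω, μ ω * (ℓ (y ω) (p (x ω)) - LP (φm (x ω))) ^ 2)
    -- the multicalibration error of p with respect to a weight function c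
    (mce : (Φ → ℝ) → ℝ)
    (hmce : ∀ c : Φ → ℝ, mce c =
      |∑ ω, μ ω * (((if y ω then (1:ℝ) else 0) - p (x ω)) * c (φm (x ω)))|)
    -- the augmented class F' and the weight-function class C
    (F' : Set (Φ → ℝ))
    (hF' : F' = {g | ∃ β ∈ Set.Icc (-1:ℝ) 1, ∃ f ∈ F,
      g = fun u => min (max ((1 - β) * H (q u) + β * f u) 0) 1})
    (C : Set (Φ → ℝ))
    (hC : C = {c | ∃ f ∈ F, c = fun u => (f u - H (q u)) * H' (q u)}) :
    (1 / 2) * sSup (adv '' F) ≤ sSup (mce '' C) ∧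
      sSup (mce '' C) ≤ Real.sqrt (sSup (adv '' F')) := by
  classical
  -- basic bounds
  have hL : ∀ ω, ℓ (y ω) (p (x ω)) ∈ Set.Icc (0:ℝ) 1 := fun ω => hℓ _ _ (hp _)
  have hHv : ∀ v ∈ Set.Icc (0:ℝ) 1, H v ∈ Set.Icc (0:ℝ) 1 := by
    intro v hv
    have h1 := hrep true v hv
    have h0 := hrep false v hv
    have b1 := hℓ true v hv
    have b0 := hℓ false v hv
    norm_num at h1 h0
    obtain ⟨hv0, hv1⟩ := hv
    obtain ⟨a1, a2⟩ := b1
    obtain ⟨c1, c2⟩ := b0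
    have hHeq : H v = v * ℓ true v + (1 - v) * ℓ false v := by
      linear_combination (-v) * h1 - (1 - v) * h0
    constructor <;> nlinarith [mul_nonneg hv0 a1, mul_nonneg (by linarith : (0:ℝ) ≤ 1 - v) c1,
      mul_le_mul_of_nonneg_left a2 hv0,
      mul_le_mul_of_nonneg_left c2 (by linarith : (0:ℝ) ≤ 1 - v)]
  have hHp : ∀ ω, H (p (x ω)) ∈ Set.Icc (0:ℝ) 1 := fun ω => hHv _ (hp _)
  have hkey : ∀ ω, ((if y ω then (1:ℝ) else 0) - p (x ω)) * H' (p (x ω))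
      = ℓ (y ω) (p (x ω)) - H (p (x ω)) := by
    intro ω
    have := hrep (y ω) _ (hp (x ω))
    linarith
  -- the correlation of f with the excess loss
  have hmce_eq : ∀ f : Φ → ℝ, mce (fun u => (f u - H (q u)) * H' (q u))
      = |∑ ω, μ ω * ((ℓ (y ω) (p (x ω)) - H (p (x ω))) * (f (φm (x ω)) - H (p (x ω))))| := by
    intro f
    rw [hmce]
    congr 1
    refine Finset.sum_congr rfl fun ω _ => ?_
    simp only [hq]
    linear_combination μ ω * (f (φm (x ω)) - H (p (x ω))) * hkey ω
  have hA1 : ∀ f : Φ → ℝ, (∀ u, f u ∈ Set.Icc (0:ℝ) 1) →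
      |∑ ω, μ ω * ((ℓ (y ω) (p (x ω)) - H (p (x ω))) * (f (φm (x ω)) - H (p (x ω))))| ≤ 1 := by
    intro f hfb
    refine (Finset.abs_sum_le_sum_abs _ _).trans ?_
    rw [← hsum]
    refine Finset.sum_le_sum fun ω _ => ?_
    obtain ⟨l0, l1⟩ := hL ω
    obtain ⟨h0', h1'⟩ := hHp ω
    obtain ⟨f0, f1⟩ := hfb (φm (x ω))
    have e1 : |ℓ (y ω) (p (x ω)) - H (p (x ω))| ≤ 1 := abs_le.mpr ⟨by linarith, by linarith⟩
    have e2 : |f (φm (x ω)) - H (p (x ω))| ≤ 1 := abs_le.mpr ⟨by linarith, by linarith⟩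
    rw [abs_mul, abs_mul, abs_of_nonneg (hμ ω)]
    have e3 : |ℓ (y ω) (p (x ω)) - H (p (x ω))| * |f (φm (x ω)) - H (p (x ω))| ≤ 1 := by
      nlinarith [abs_nonneg (ℓ (y ω) (p (x ω)) - H (p (x ω))),
        abs_nonneg (f (φm (x ω)) - H (p (x ω)))]
    exact mul_le_of_le_one_right (hμ ω) e3
  have hadv_le1 : ∀ LP : Φ → ℝ, adv LP ≤ 1 := by
    intro LP
    rw [hadv]
    have h1 : ∑ ω, μ ω * (ℓ (y ω) (p (x ω)) - H (p (x ω))) ^ 2 ≤ 1 := by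
      rw [← hsum]
      refine Finset.sum_le_sum fun ω _ => ?_
      obtain ⟨l0, l1⟩ := hL ω
      obtain ⟨h0', h1'⟩ := hHp ω
      have e : (ℓ (y ω) (p (x ω)) - H (p (x ω))) ^ 2 ≤ 1 := by nlinarith
      exact mul_le_of_le_one_right (hμ ω) e
    have h2 : 0 ≤ ∑ ω, μ ω * (ℓ (y ω) (p (x ω)) - LP (φm (x ω))) ^ 2 :=
      Finset.sum_nonneg fun ω _ => mul_nonneg (hμ ω) (sq_nonneg _)
    linarith
  have bddC : BddAbove (mce '' C) := by
    refine ⟨1, ?_⟩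
    rintro m ⟨c, hc, rfl⟩
    rw [hC] at hc
    obtain ⟨f, hf, rfl⟩ := hc
    rw [hmce_eq f]
    exact hA1 f (hF f hf)
  have bddF' : BddAbove (adv '' F') := by
    refine ⟨1, ?_⟩
    rintro m ⟨g, _, rfl⟩
    exact hadv_le1 g
  obtain ⟨f₀, hf₀⟩ := hFne
  have hS0 : 0 ≤ sSup (mce '' C) := by
    have hc₀ : (fun u => (f₀ u - H (q u)) * H' (q u)) ∈ C := by
      rw [hC]; exact ⟨f₀, hf₀, rfl⟩
    refine le_trans ?_ (le_csSup bddC ⟨_, hc₀, rfl⟩)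
    rw [hmce_eq]
    exact abs_nonneg _
  constructor
  · -- left inequality
    have h2 : sSup (adv '' F) ≤ 2 * sSup (mce '' C) := by
      refine Real.sSup_le ?_ (by linarith)
      rintro m ⟨f, hf, rfl⟩
      have hcf : (fun u => (f u - H (q u)) * H' (q u)) ∈ C := by
        rw [hC]; exact ⟨f, hf, rfl⟩
      have h3 : |∑ ω, μ ω * ((ℓ (y ω) (p (x ω)) - H (p (x ω))) * (f (φm (x ω)) - H (p (x ω))))|
          ≤ sSup (mce '' C) := by
        rw [← hmce_eq f]; exact le_csSup bddC ⟨_, hcf, rfl⟩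
      have h4 : adv f ≤ 2 * ∑ ω, μ ω *
          ((ℓ (y ω) (p (x ω)) - H (p (x ω))) * (f (φm (x ω)) - H (p (x ω)))) := by
        rw [hadv, ← Finset.sum_sub_distrib, Finset.mul_sum]
        refine Finset.sum_le_sum fun ω _ => ?_
        nlinarith [mul_nonneg (hμ ω) (sq_nonneg (f (φm (x ω)) - H (p (x ω))))]
      have h5 := le_abs_self (∑ ω, μ ω *
          ((ℓ (y ω) (p (x ω)) - H (p (x ω))) * (f (φm (x ω)) - H (p (x ω)))))
      linarith
    linarith
  · -- right inequality
    refine Real.sSup_le ?_ (Real.sqrt_nonneg _)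
    rintro m ⟨c, hc, rfl⟩
    rw [hC] at hc
    obtain ⟨f, hf, rfl⟩ := hc
    rw [hmce_eq f]
    set a := ∑ ω, μ ω * ((ℓ (y ω) (p (x ω)) - H (p (x ω))) * (f (φm (x ω)) - H (p (x ω)))) with ha
    have haf : |a| ≤ 1 := hA1 f (hF f hf)
    set g : Φ → ℝ := fun u => min (max ((1 - a) * H (q u) + a * f u) 0) 1 with hg
    have hgF' : g ∈ F' := by
      rw [hF']
      exact ⟨a, abs_le.mp haf, f, hf, rfl⟩
    have clip : ∀ Lv t : ℝ, 0 ≤ Lv → Lv ≤ 1 → (Lv - min (max t 0) 1) ^ 2 ≤ (Lv - t) ^ 2 := by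
      intro Lv t h0 h1
      rcases le_total t 0 with ht | ht
      · rw [max_eq_right ht, min_eq_left (by norm_num : (0:ℝ) ≤ 1)]
        nlinarith
      · rw [max_eq_left ht]
        rcases le_total t 1 with ht1 | ht1
        · rw [min_eq_left ht1]
        · rw [min_eq_right ht1]
          nlinarith
    have hclip : ∀ ω, μ ω * (ℓ (y ω) (p (x ω)) - g (φm (x ω))) ^ 2
        ≤ μ ω * (ℓ (y ω) (p (x ω))
            - (H (p (x ω)) + a * (f (φm (x ω)) - H (p (x ω))))) ^ 2 := by
      intro ω
      refine mul_le_mul_of_nonneg_left ?_ (hμ ω)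
      simp only [hg, hq]
      obtain ⟨l0, l1⟩ := hL ω
      exact le_trans (clip _ _ l0 l1) (le_of_eq (by ring))
    have hBle : ∑ ω, μ ω * (f (φm (x ω)) - H (p (x ω))) ^ 2 ≤ 1 := by
      rw [← hsum]
      refine Finset.sum_le_sum fun ω _ => ?_
      obtain ⟨f0, f1⟩ := hF f hf (φm (x ω))
      obtain ⟨h0', h1'⟩ := hHp ω
      have e : (f (φm (x ω)) - H (p (x ω))) ^ 2 ≤ 1 := by nlinarith
      exact mul_le_of_le_one_right (hμ ω) e
    have hexp : ∑ ω, μ ω * (ℓ (y ω) (p (x ω))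
          - (H (p (x ω)) + a * (f (φm (x ω)) - H (p (x ω))))) ^ 2
        = (∑ ω, μ ω * (ℓ (y ω) (p (x ω)) - H (p (x ω))) ^ 2) - 2 * a * a
          + a ^ 2 * ∑ ω, μ ω * (f (φm (x ω)) - H (p (x ω))) ^ 2 := by
      have e1 : ∀ ω ∈ Finset.univ, μ ω * (ℓ (y ω) (p (x ω))
            - (H (p (x ω)) + a * (f (φm (x ω)) - H (p (x ω))))) ^ 2
          = μ ω * (ℓ (y ω) (p (x ω)) - H (p (x ω))) ^ 2
            - 2 * a * (μ ω * ((ℓ (y ω) (p (x ω)) - H (p (x ω)))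
              * (f (φm (x ω)) - H (p (x ω)))))
            + a ^ 2 * (μ ω * (f (φm (x ω)) - H (p (x ω))) ^ 2) := fun ω _ => by ring
      rw [Finset.sum_congr rfl e1, Finset.sum_add_distrib, Finset.sum_sub_distrib,
        ← Finset.mul_sum, ← Finset.mul_sum, ← ha]
    have hadvg : a ^ 2 ≤ adv g := by
      rw [hadv]
      have step1 : ∑ ω, μ ω * (ℓ (y ω) (p (x ω)) - g (φm (x ω))) ^ 2
          ≤ ∑ ω, μ ω * (ℓ (y ω) (p (x ω))
              - (H (p (x ω)) + a * (f (φm (x ω)) - H (p (x ω))))) ^ 2 :=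
        Finset.sum_le_sum fun ω _ => hclip ω
      have hab : a ^ 2 * ∑ ω, μ ω * (f (φm (x ω)) - H (p (x ω))) ^ 2 ≤ a ^ 2 := by
        nlinarith [sq_nonneg a]
      nlinarith [step1, hexp]
    have hle : adv g ≤ sSup (adv '' F') := le_csSup bddF' ⟨g, hgF', rfl⟩
    calc |a| = Real.sqrt (a ^ 2) := (Real.sqrt_sq_eq_abs a).symm
      _ ≤ Real.sqrt (sSup (adv '' F')) := Real.sqrt_le_sqrt (by linarith)
end

section
/- In the potential argument for product-class multicalibration: if δ : X → [-1,1] satisfies E[(p*(x) - p_t(x))·δ(x)] ≥ α/2 with p*, p_t : X → [0,1], then the update p_{t+1}(x) = Π_{[0,1]}(p_t(x) + (α/2)·δ(x)) satisfies E[(p*(x) - p_t(x))²] - E[(p*(x) - p_{t+1}(x))²] ≥ α²/4. -/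
/-- Potential argument for product-class multicalibration:
if E[(p*(x) - p_t(x)) δ(x)] ≥ α/2, then the update
p_{t+1}(x) = Π_{[0,1]}(p_t(x) + (α/2) δ(x)) satisfies
E[(p* - p_t)²] - E[(p* - p_{t+1})²] ≥ α²/4. -/
theorem stmt_15 {X : Type*} [Fintype X]
    (μ : X → ℝ) (hμ : ∀ a, 0 ≤ μ a) (hsum : ∑ a, μ a = 1)
    (pstar pt : X → ℝ)
    (hpstar : ∀ a, pstar a ∈ Set.Icc (0:ℝ) 1) (hpt : ∀ a, pt a ∈ Set.Icc (0:ℝ) 1)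
    (α : ℝ) (hα : 0 < α)
    (δ : X → ℝ) (hδ : ∀ a, δ a ∈ Set.Icc (-1:ℝ) 1)
    (hcorr : α / 2 ≤ ∑ a, μ a * ((pstar a - pt a) * δ a))
    (pt1 : X → ℝ) (hpt1 : ∀ a, pt1 a = min (max (pt a + (α / 2) * δ a) 0) 1) :
    α ^ 2 / 4 ≤ (∑ a, μ a * (pstar a - pt a) ^ 2)
        - ∑ a, μ a * (pstar a - pt1 a) ^ 2 := by
  set η := α / 2 with hη
  have key : ∀ a, μ a * (pstar a - pt1 a) ^ 2 ≤
      μ a * ((pstar a - pt a) ^ 2 - 2 * η * ((pstar a - pt a) * δ a) + η ^ 2 * 1) := by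
    intro a
    have h1 := (hpstar a).1; have h2 := (hpstar a).2
    have hd1 := (hδ a).1; have hd2 := (hδ a).2
    have hproj : (pstar a - pt1 a) ^ 2 ≤ (pstar a - (pt a + η * δ a)) ^ 2 := by
      rw [hpt1 a]
      rcases le_total (pt a + η * δ a) 0 with h | h
      · rw [max_eq_right h, min_eq_left (by norm_num)]
        nlinarith
      · rw [max_eq_left h]
        rcases le_total (pt a + η * δ a) 1 with h' | h'
        · rw [min_eq_left h']
        · rw [min_eq_right h']
          nlinarith
    have hd : (δ a) ^ 2 ≤ 1 := by nlinarith
    have : (pstar a - (pt a + η * δ a)) ^ 2 ≤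
        (pstar a - pt a) ^ 2 - 2 * η * ((pstar a - pt a) * δ a) + η ^ 2 * 1 := by
      nlinarith [sq_nonneg η]
    nlinarith [hμ a, hproj.trans this]
  have hsum2 : ∑ a, μ a * (pstar a - pt1 a) ^ 2 ≤
      ∑ a, μ a * ((pstar a - pt a) ^ 2 - 2 * η * ((pstar a - pt a) * δ a) + η ^ 2 * 1) :=
    Finset.sum_le_sum fun a _ => key a
  have hexp : ∑ a, μ a * ((pstar a - pt a) ^ 2 - 2 * η * ((pstar a - pt a) * δ a) + η ^ 2 * 1)
      = (∑ a, μ a * (pstar a - pt a) ^ 2)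
        - 2 * η * (∑ a, μ a * ((pstar a - pt a) * δ a)) + η ^ 2 * ∑ a, μ a := by
    rw [Finset.mul_sum, Finset.mul_sum, ← Finset.sum_sub_distrib, ← Finset.sum_add_distrib]
    congr 1; ext a; ring
  rw [hexp, hsum] at hsum2
  nlinarith [hsum2, hcorr, hα]
end
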